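/- The word function sq : {0,1}* → ℚ defined by sq(w) = 2^{ℓ(w)²}, where ℓ(w) is the length of w, is not recognizable by any weighted automaton over ℚ: its Hankel matrix has infinite rank. -/

import Mathlib

open Matrix

def wordProd {S : Type*} [CommSemiring S] {A : Type*} {r : ℕ}
    (μ : A → Matrix (Fin r) (Fin r) S) (w : List A) : Matrix (Fin r) (Fin r) S :=
  (w.map μ).prod

/-! On the rows and columns indexed by the words `1ⁱ`, the Hankel matrix of `w ↦ b^{|w|²}` is
`(b^{(i+k)²}) = diag(b^{i²}) · V(b^{2i}) · diag(b^{k²})` with `V` a Vandermonde matrix, nonsingular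
for `b > 1`. For a function recognized by `(α, μ, γ)`, on the other hand, the row of `u` is the
image of `α μ(u) ∈ Kʳ` under a linear map that does not depend on `u`, so at most `r` rows are
linearly independent. -/

theorem wordProd_append {S A : Type*} [CommSemiring S] {r : ℕ}
    (μ : A → Matrix (Fin r) (Fin r) S) (u v : List A) :
    wordProd μ (u ++ v) = wordProd μ u * wordProd μ v := by
  simp [wordProd]

def hankelRow {A K : Type*} (f : List A → K) (u : List A) : List A → K :=
  fun v => f (u ++ v)

section Recognizable

variable {K A : Type*} [Field K] {r : ℕ} (α γ : Fin r → K) (μ : A → Matrix (Fin r) (Fin r) K)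

theorem hankelRow_eq_mulVec (u : List A) :
    hankelRow (fun w => α ⬝ᵥ (wordProd μ w *ᵥ γ)) u =
      of (fun v => wordProd μ v *ᵥ γ) *ᵥ (α ᵥ* wordProd μ u) := by
  funext v
  change α ⬝ᵥ (wordProd μ (u ++ v) *ᵥ γ) = (wordProd μ v *ᵥ γ) ⬝ᵥ (α ᵥ* wordProd μ u)
  rw [wordProd_append, ← mulVec_mulVec, dotProduct_mulVec, dotProduct_comm]

theorem card_le_of_linearIndependent_hankelRow {ι : Type*} [Fintype ι] {f : List A → K}
    (hf : ∀ w, f w = α ⬝ᵥ (wordProd μ w *ᵥ γ)) {u : ι → List A}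
    (hu : LinearIndependent K fun i => hankelRow f (u i)) :
    Fintype.card ι ≤ r := by
  obtain rfl : f = fun w => α ⬝ᵥ (wordProd μ w *ᵥ γ) := funext hf
  simp only [hankelRow_eq_mulVec] at hu
  have hrows : LinearIndependent K fun i => α ᵥ* wordProd μ (u i) :=
    LinearIndependent.of_comp (of fun v => wordProd μ v *ᵥ γ).mulVecLin hu
  simpa using hrows.fintype_card_le_finrank

end Recognizable

section PowSq

variable {K : Type*} [Field K] [LinearOrder K] [IsStrictOrderedRing K] {b : K}

theorem det_pow_add_sq_ne_zero (hb : 1 < b) (n : ℕ) :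
    (of fun i j : Fin n => b ^ (((i : ℕ) + j) ^ 2)).det ≠ 0 := by
  have hb₀ : 0 < b := zero_lt_one.trans hb
  have hfactor : (of fun i j : Fin n => b ^ (((i : ℕ) + j) ^ 2)) =
      diagonal (fun i : Fin n => b ^ ((i : ℕ) ^ 2)) *
        vandermonde (fun i : Fin n => (b ^ 2) ^ (i : ℕ)) *
        diagonal (fun i : Fin n => b ^ ((i : ℕ) ^ 2)) := by
    ext i j
    simp only [of_apply, diagonal_mul, mul_diagonal, vandermonde_apply, ← pow_mul, ← pow_add]
    ring_nf
  have hnodes : Function.Injective fun i : Fin n => (b ^ 2) ^ (i : ℕ) :=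
    (pow_right_strictMono₀ (one_lt_pow₀ hb two_ne_zero)).injective.comp Fin.val_injective
  rw [hfactor, det_mul, det_mul, det_diagonal]
  exact mul_ne_zero (mul_ne_zero (Finset.prod_ne_zero_iff.2 fun i _ => by positivity)
    (det_vandermonde_ne_zero_iff.2 hnodes)) (Finset.prod_ne_zero_iff.2 fun i _ => by positivity)

theorem linearIndependent_hankelRow_pow_length_sq (hb : 1 < b) (n : ℕ) :
    LinearIndependent K fun i : Fin n =>
      hankelRow (fun w : List Bool => b ^ (w.length ^ 2)) (List.replicate i true) := by
  have hsub : LinearIndependent K fun i j : Fin n => b ^ (((i : ℕ) + j) ^ 2) :=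
    linearIndependent_rows_iff_isUnit.2 <|
      (isUnit_iff_isUnit_det _).2 (isUnit_iff_ne_zero.2 (det_pow_add_sq_ne_zero hb n))
  refine LinearIndependent.of_comp
    (LinearMap.funLeft K K fun j : Fin n => List.replicate j true) ?_
  convert hsub using 1
  funext i j
  simp [hankelRow, LinearMap.funLeft]

end PowSq

/-- The Hankel matrix of `sq(w) = 2^{ℓ(w)²}` has infinite rank over `ℚ`, and hence
`sq` is not recognizable by any weighted automaton over `ℚ`. -/
theorem sq_not_recognizable :
    (∀ n : ℕ, ∃ u : Fin n → List Bool,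
      LinearIndependent ℚ
        (fun i : Fin n => (fun v : List Bool => (2 : ℚ) ^ ((u i ++ v).length ^ 2)))) ∧
    ¬ ∃ (r : ℕ) (α γ : Fin r → ℚ) (μ : Bool → Matrix (Fin r) (Fin r) ℚ),
      ∀ w : List Bool, (2 : ℚ) ^ (w.length ^ 2) = α ⬝ᵥ (wordProd μ w *ᵥ γ) := by
  refine ⟨fun n => ⟨_, linearIndependent_hankelRow_pow_length_sq one_lt_two n⟩, ?_⟩
  rintro ⟨r, α, γ, μ, hsq⟩
  have hcard := card_le_of_linearIndependent_hankelRow α γ μ hsq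
    (linearIndependent_hankelRow_pow_length_sq one_lt_two (r + 1))
  simp at hcard
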